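/- Let n ≥ 1, let A be an index set, and for each α ∈ A let T_α be a tempered distribution on ℝⁿ (a continuous linear functional on 𝓢(ℝⁿ, ℂ)) and ξ_α ∈ ℝⁿ. Assume: (1) there exists c > 0 with ‖ξ_α‖ ≤ c for all α ∈ A; (2) there exist l ∈ ℕ and b > 0 such that |T_α(φ)| ≤ b · sup_{ξ ∈ ℝⁿ} (1+‖ξ‖)^l |φ(ξ)| for every α ∈ A and every Schwartz function φ. Then for every compact set S ⊆ ℝⁿ there exist k ∈ ℕ and b₂ > 0 with the following property: for every smooth function ω : ℝⁿ → ℂ supported in S, every α ∈ A, and every Schwartz function g ∈ 𝓢(ℝⁿ, ℂ) whose underlying function is ξ ↦ ∫_{ℝⁿ} ω(v) · e^{⟨ξ_α, v⟩} · e^{i⟨ξ, v⟩} dv, one has |T_α(g)| ≤ b₂ · max_{|β| ≤ k} sup_{x ∈ ℝⁿ} |∂^β ω(x)|. -/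

import Mathlib

open MeasureTheory SchwartzMap

/-- Iterated partial derivative of a complex-valued function on `ℝⁿ` along a multi-index,
encoded as a list of coordinate directions. -/
noncomputable def multiDeriv {n : ℕ} :
    List (Fin n) → (EuclideanSpace ℝ (Fin n) → ℂ) → EuclideanSpace ℝ (Fin n) → ℂ
  | [], f => f
  | i :: β, f => fun x => fderiv ℝ (multiDeriv β f) x (EuclideanSpace.single i 1)

open Function FourierTransform Real RealInnerProductSpace

namespace UFLaux

variable {n : ℕ}

lemma euclidean_eq_sum_single (x : EuclideanSpace ℝ (Fin n)) :
    x = ∑ i, x i • EuclideanSpace.single i (1:ℝ) := by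
  conv_lhs => rw [← (EuclideanSpace.basisFun (Fin n) ℝ).sum_repr x]
  simp [EuclideanSpace.basisFun_apply, EuclideanSpace.basisFun_repr]

lemma abs_coord_le_norm (x : EuclideanSpace ℝ (Fin n)) (i : Fin n) : |x i| ≤ ‖x‖ := by
  have h := abs_real_inner_le_norm (EuclideanSpace.single i (1:ℝ)) x
  rw [EuclideanSpace.inner_single_left] at h
  simpa [EuclideanSpace.norm_single] using h

lemma multiDeriv_ofFn {f : EuclideanSpace ℝ (Fin n) → ℂ} (hf : ContDiff ℝ (⊤:ℕ∞) f) :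
    ∀ (m : ℕ) (d : Fin m → Fin n) (x : EuclideanSpace ℝ (Fin n)),
      multiDeriv (List.ofFn d) f x
        = iteratedFDeriv ℝ m f x (fun j => EuclideanSpace.single (d j) 1)
  | 0, d, x => by
      simp [List.ofFn_zero, multiDeriv, iteratedFDeriv_zero_apply]
  | (m+1), d, x => by
      have hdiff : DifferentiableAt ℝ (iteratedFDeriv ℝ m f) x :=
        (hf.differentiable_iteratedFDeriv (mod_cast ENat.coe_lt_top m)).differentiableAt
      have IH : multiDeriv (List.ofFn fun i => d i.succ) f
          = fun y => iteratedFDeriv ℝ m f y fun j => EuclideanSpace.single (d j.succ) 1 :=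
        funext fun y => multiDeriv_ofFn hf m _ y
      rw [List.ofFn_succ]
      show fderiv ℝ (multiDeriv (List.ofFn fun i => d i.succ) f) x
          (EuclideanSpace.single (d 0) 1) = _
      rw [IH, iteratedFDeriv_succ_apply_left,
        fderiv_continuousMultilinear_apply_const_apply hdiff]
      rfl

lemma norm_multilinear_le (hn : 1 ≤ n) {m : ℕ}
    (A : ContinuousMultilinearMap ℝ (fun _ : Fin m => EuclideanSpace ℝ (Fin n)) ℂ) {M : ℝ}
    (hA : ∀ d : Fin m → Fin n, ‖A fun j => EuclideanSpace.single (d j) 1‖ ≤ M) :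
    ‖A‖ ≤ (n:ℝ)^m * M := by
  have hM0 : 0 ≤ M := le_trans (norm_nonneg _) (hA fun _ => ⟨0, hn⟩)
  refine A.opNorm_le_bound (by positivity) fun v => ?_
  have expand : A v = ∑ d : Fin m → Fin n,
      (∏ j, v j (d j)) • A (fun j => EuclideanSpace.single (d j) 1) := by
    have hv : A v = A (fun j => ∑ i, (v j i) • EuclideanSpace.single i (1:ℝ)) := by
      congr 1
      exact funext fun j => euclidean_eq_sum_single (v j)
    rw [hv, A.map_sum]
    exact Finset.sum_congr rfl fun d _ => A.map_smul_univ _ _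
  rw [expand]
  refine (norm_sum_le _ _).trans ?_
  have hterm : ∀ d : Fin m → Fin n,
      ‖(∏ j, v j (d j)) • A (fun j => EuclideanSpace.single (d j) 1)‖
        ≤ M * ∏ j, ‖v j‖ := by
    intro d
    rw [norm_smul, Real.norm_eq_abs, Finset.abs_prod]
    have h1 : (∏ j, |v j (d j)|) ≤ ∏ j, ‖v j‖ :=
      Finset.prod_le_prod (fun j _ => abs_nonneg _) fun j _ => abs_coord_le_norm _ _
    have := mul_le_mul h1 (hA d) (norm_nonneg _)
      (Finset.prod_nonneg fun j _ => norm_nonneg _)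
    linarith [this]
  refine (Finset.sum_le_sum fun d _ => hterm d).trans ?_
  rw [Finset.sum_const, Finset.card_univ]
  simp only [Fintype.card_fun, Fintype.card_fin, nsmul_eq_mul]
  push_cast
  exact le_of_eq (by ring)

lemma norm_itfd_exp_le (ξ0 : EuclideanSpace ℝ (Fin n)) (j : ℕ) (v : EuclideanSpace ℝ (Fin n)) :
    ‖iteratedFDeriv ℝ j (fun y : EuclideanSpace ℝ (Fin n) =>
        Complex.exp (((inner ℝ ξ0 y : ℝ) : ℂ))) v‖
      ≤ ‖ξ0‖^j * Real.exp (‖ξ0‖ * ‖v‖) := by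
  have hfun : (fun y : EuclideanSpace ℝ (Fin n) => Complex.exp (((inner ℝ ξ0 y : ℝ) : ℂ)))
      = Complex.ofRealLI ∘ (Real.exp ∘ (innerSL ℝ ξ0)) := by
    funext y
    simp [Complex.ofRealLI, Complex.ofReal_exp]
    exact (Complex.ofReal_exp _).symm
  have hsm : ContDiff ℝ (⊤:ℕ∞) (Real.exp ∘ (innerSL ℝ ξ0)) :=
    Real.contDiff_exp.comp (innerSL ℝ ξ0).contDiff
  rw [hfun, Complex.ofRealLI.norm_iteratedFDeriv_comp_left hsm.contDiffAt (by exact_mod_cast le_top),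
    (innerSL ℝ ξ0).iteratedFDeriv_comp_right Real.contDiff_exp v (le_top)]
  refine (ContinuousMultilinearMap.norm_compContinuousLinearMap_le _ _).trans ?_
  rw [norm_iteratedFDeriv_eq_norm_iteratedDeriv, iteratedDeriv_eq_iterate, Real.iter_deriv_exp]
  simp only [Finset.prod_const, Finset.card_univ, Fintype.card_fin]
  rw [Real.norm_eq_abs, abs_of_pos (Real.exp_pos _), innerSL_apply_norm]
  have h1 : Real.exp ((innerSL ℝ ξ0) v) ≤ Real.exp (‖ξ0‖ * ‖v‖) := by
    refine Real.exp_le_exp.2 ?_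
    simpa [innerSL_apply_apply] using real_inner_le_norm ξ0 v
  have h2 : (0:ℝ) ≤ ‖ξ0‖ ^ j := by positivity
  calc Real.exp ((innerSL ℝ ξ0) v) * ‖ξ0‖ ^ j ≤ Real.exp (‖ξ0‖*‖v‖) * ‖ξ0‖^j :=
        mul_le_mul_of_nonneg_right h1 h2
    _ = ‖ξ0‖^j * Real.exp (‖ξ0‖*‖v‖) := mul_comm _ _

end UFLaux

set_option maxHeartbeats 1600000 in
/-- Uniform equicontinuity estimate: if `T_α` is a family of tempered distributions of
uniformly bounded order and `ξ_α` a uniformly bounded family of shifts, then for every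
compact set `S` there are `k` and `b₂` so that testing `T_α` against the Fourier–Laplace
transform `ξ ↦ ∫ ω(v) e^{⟨ξ_α,v⟩ + i⟨ξ,v⟩} dv` of any smooth `ω` supported in `S` is
bounded by `b₂` times a bound `M` on all partial derivatives of `ω` of order at most `k`. -/
theorem uniform_fourierLaplace_bound (n : ℕ) (hn : 1 ≤ n) {A : Type*}
    (T : A → (𝓢(EuclideanSpace ℝ (Fin n), ℂ) →L[ℂ] ℂ))
    (ξ : A → EuclideanSpace ℝ (Fin n))
    (c : ℝ) (hc : 0 < c) (hξc : ∀ α, ‖ξ α‖ ≤ c)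
    (l : ℕ) (b : ℝ) (hb : 0 < b)
    (hT : ∀ α, ∀ φ : 𝓢(EuclideanSpace ℝ (Fin n), ℂ),
      ‖T α φ‖ ≤ b * ⨆ x : EuclideanSpace ℝ (Fin n), (1 + ‖x‖) ^ l * ‖φ x‖) :
    ∀ S : Set (EuclideanSpace ℝ (Fin n)), IsCompact S →
      ∃ k : ℕ, ∃ b₂ : ℝ, 0 < b₂ ∧
        ∀ ω : EuclideanSpace ℝ (Fin n) → ℂ, ContDiff ℝ (⊤ : ℕ∞) ω → Function.support ω ⊆ S →
        ∀ α, ∀ g : 𝓢(EuclideanSpace ℝ (Fin n), ℂ),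
          (∀ x, g x = ∫ v, ω v *
            Complex.exp (((inner ℝ (ξ α) v : ℝ) : ℂ) + Complex.I * ((inner ℝ x v : ℝ) : ℂ))) →
          ∀ M : ℝ, (∀ β : List (Fin n), β.length ≤ k → ∀ x, ‖multiDeriv β ω x‖ ≤ M) →
          ‖T α g‖ ≤ b₂ * M := by
  intro S hS
  obtain ⟨R, hSR⟩ := hS.isBounded.subset_closedBall 0
  set CF : ℝ := 2^l * ((n:ℝ)^l * ((max 1 c)^l * Real.exp (c * R))) with hCF
  have hCF0 : 0 ≤ CF := by rw [hCF]; positivity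
  set Vol : ℝ := (volume (Metric.closedBall (0:EuclideanSpace ℝ (Fin n)) R)).toReal with hVol
  have hVol0 : 0 ≤ Vol := ENNReal.toReal_nonneg
  set C2 : ℝ := 2^l * (1 + (2*π)^l * 2^l) with hC2
  have hC20 : 0 ≤ C2 := by rw [hC2]; positivity
  set Ctot : ℝ := C2 * (((l:ℝ)+1) * (Vol * CF)) with hCtot
  have hCtot0 : 0 ≤ Ctot := by
    rw [hCtot]; positivity
  refine ⟨l, b * Ctot + 1, by positivity, ?_⟩
  intro ω hω hsupp α g hg M hM
  have hω' : ContDiff ℝ (⊤:ℕ∞) ω := hω.of_le (by simp)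
  have hM0 : 0 ≤ M := le_trans (norm_nonneg _) (hM [] (Nat.zero_le _) 0)
  set Eξ : EuclideanSpace ℝ (Fin n) → ℂ :=
    fun v => Complex.exp (((inner ℝ (ξ α) v : ℝ) : ℂ)) with hEξ
  have hEsm : ContDiff ℝ (⊤:ℕ∞) Eξ := by
    apply Complex.contDiff_exp.comp
    exact Complex.ofRealCLM.contDiff.comp (innerSL ℝ (ξ α)).contDiff
  set F : EuclideanSpace ℝ (Fin n) → ℂ := fun v => ω v * Eξ v with hFdef
  have hFsm : ContDiff ℝ (⊤:ℕ∞) F := hω'.mul hEsm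
  have hFsupp : HasCompactSupport F := by
    apply HasCompactSupport.intro hS
    intro x hx
    have hωx : ω x = 0 := by
      by_contra h
      exact hx (hsupp h)
    simp [hFdef, hωx]
  have hint : ∀ m : ℕ, Integrable (iteratedFDeriv ℝ m F) := fun m =>
    (ContDiff.continuous_iteratedFDeriv (by exact_mod_cast le_top) hFsm).integrable_of_hasCompactSupport
      (hFsupp.iteratedFDeriv m)
  have hωbound : ∀ i : ℕ, i ≤ l → ∀ v, ‖iteratedFDeriv ℝ i ω v‖ ≤ (n:ℝ)^l * M := by
    intro i hi v
    have h1 : ‖iteratedFDeriv ℝ i ω v‖ ≤ (n:ℝ)^i * M := by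
      refine UFLaux.norm_multilinear_le hn _ fun d => ?_
      rw [← UFLaux.multiDeriv_ofFn hω' i d v]
      exact hM (List.ofFn d) (by simpa using hi) v
    refine h1.trans (mul_le_mul_of_nonneg_right ?_ hM0)
    exact pow_le_pow_right₀ (by exact_mod_cast hn) hi
  have hexp : ∀ jj : ℕ, jj ≤ l → ∀ v : EuclideanSpace ℝ (Fin n), ‖v‖ ≤ R →
      ‖iteratedFDeriv ℝ jj Eξ v‖ ≤ (max 1 c)^l * Real.exp (c * R) := by
    intro jj hj v hv
    refine (UFLaux.norm_itfd_exp_le (ξ α) jj v).trans ?_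
    have h1 : ‖ξ α‖^jj ≤ (max 1 c)^l := by
      calc ‖ξ α‖^jj ≤ (max 1 c)^jj :=
            pow_le_pow_left₀ (norm_nonneg _) ((hξc α).trans (le_max_right _ _)) _
        _ ≤ (max 1 c)^l := pow_le_pow_right₀ (le_max_left _ _) hj
    have h2 : Real.exp (‖ξ α‖ * ‖v‖) ≤ Real.exp (c * R) :=
      Real.exp_le_exp.2 (mul_le_mul (hξc α) hv (norm_nonneg _) hc.le)
    exact mul_le_mul h1 h2 (Real.exp_pos _).le (by positivity)
  have hFsuppS : tsupport F ⊆ S :=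
    closure_minimal (fun x hx => hsupp (left_ne_zero_of_mul hx)) hS.isClosed
  have hFbound : ∀ m : ℕ, m ≤ l → ∀ v, ‖iteratedFDeriv ℝ m F v‖
      ≤ Set.indicator (Metric.closedBall (0:EuclideanSpace ℝ (Fin n)) R) (fun _ => CF * M) v := by
    intro m hm v
    by_cases hv : v ∈ Metric.closedBall (0:EuclideanSpace ℝ (Fin n)) R
    · rw [Set.indicator_of_mem hv]
      have hv' : ‖v‖ ≤ R := by simpa [Metric.mem_closedBall] using hv
      refine (norm_iteratedFDeriv_mul_le hω' hEsm v (by exact_mod_cast le_top)).trans ?_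
      have hterm : ∀ i ∈ Finset.range (m+1),
          (m.choose i : ℝ) * ‖iteratedFDeriv ℝ i ω v‖ * ‖iteratedFDeriv ℝ (m-i) Eξ v‖
            ≤ (m.choose i : ℝ) * ((n:ℝ)^l * M * ((max 1 c)^l * Real.exp (c * R))) := by
        intro i hi
        have hi' : i ≤ l := le_trans (Nat.lt_succ_iff.1 (Finset.mem_range.1 hi)) hm
        have h2 : m - i ≤ l := le_trans (Nat.sub_le _ _) hm
        rw [mul_assoc, mul_assoc]
        refine mul_le_mul_of_nonneg_left ?_ (by positivity)
        rw [← mul_assoc]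
        have := mul_le_mul (hωbound i hi' v) (hexp (m-i) h2 v hv') (norm_nonneg _)
          (by positivity)
        calc ‖iteratedFDeriv ℝ i ω v‖ * ‖iteratedFDeriv ℝ (m-i) Eξ v‖
            ≤ ((n:ℝ)^l * M) * ((max 1 c)^l * Real.exp (c*R)) := this
          _ = (n:ℝ)^l * M * ((max 1 c)^l * Real.exp (c*R)) := by ring
      refine (Finset.sum_le_sum hterm).trans ?_
      rw [← Finset.sum_mul]
      have hch : (∑ i ∈ Finset.range (m+1), (m.choose i : ℝ)) = (2:ℝ)^m := by
        rw [← Nat.cast_sum, Nat.sum_range_choose]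
        push_cast; ring
      rw [hch]
      have h2m : (2:ℝ)^m ≤ 2^l := pow_le_pow_right₀ one_le_two hm
      calc (2:ℝ)^m * ((n:ℝ)^l * M * ((max 1 c)^l * Real.exp (c*R)))
          ≤ 2^l * ((n:ℝ)^l * M * ((max 1 c)^l * Real.exp (c*R))) :=
            mul_le_mul_of_nonneg_right h2m (by positivity)
        _ = CF * M := by rw [hCF]; ring
    · rw [Set.indicator_of_notMem hv]
      have hzero : iteratedFDeriv ℝ m F v = 0 := by
        by_contra h
        exact hv (hSR (hFsuppS (support_iteratedFDeriv_subset m h)))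
      simp [hzero]
  have hCFM : 0 ≤ CF * M := by positivity
  have hintbound : ∀ m : ℕ, m ≤ l →
      (∫ v, ‖iteratedFDeriv ℝ m F v‖) ≤ Vol * (CF * M) := by
    intro m hm
    have hind : Integrable (Set.indicator
        (Metric.closedBall (0:EuclideanSpace ℝ (Fin n)) R) (fun _ => CF * M)) volume := by
      rw [integrable_indicator_iff measurableSet_closedBall]
      exact integrableOn_const measure_closedBall_lt_top.ne
    refine (integral_mono (hint m).norm hind (hFbound m hm)).trans ?_
    rw [integral_indicator_const _ measurableSet_closedBall, smul_eq_mul, measureReal_def, ← hVol]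
  set J : ℝ := ∑ m ∈ Finset.range (l+1), ∫ v, ‖iteratedFDeriv ℝ m F v‖ with hJdef
  have hJnn : 0 ≤ J :=
    Finset.sum_nonneg fun m _ => integral_nonneg fun v => norm_nonneg _
  have hJle : J ≤ ((l:ℝ)+1) * (Vol * (CF * M)) := by
    refine (Finset.sum_le_sum fun m hm =>
      hintbound m (Nat.lt_succ_iff.1 (Finset.mem_range.1 hm))).trans ?_
    rw [Finset.sum_const, Finset.card_range, nsmul_eq_mul]
    push_cast
    exact le_of_eq (by ring)
  have hπ : (0:ℝ) < 2*π := by positivity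
  have h'f : ∀ (kk mm : ℕ), (kk:ℕ∞) ≤ (0:ℕ∞) → (mm:ℕ∞) ≤ (l:ℕ∞) →
      Integrable (fun v : EuclideanSpace ℝ (Fin n) =>
        ‖v‖^kk * ‖iteratedFDeriv ℝ mm F v‖) := by
    intro kk mm hkk _
    have hkk0 : kk = 0 := Nat.le_zero.1 (by exact_mod_cast hkk)
    subst hkk0
    simpa using (hint mm).norm
  have hdecay : ∀ (w : EuclideanSpace ℝ (Fin n)) (N : ℕ), N ≤ l →
      ‖w‖^N * ‖𝓕 F w‖ ≤ 2^N * J := by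
    intro w N hN
    have h := Real.pow_mul_norm_iteratedFDeriv_fourier_le
      (f := F) (K := (0:ℕ∞)) (N := (l:ℕ∞))
      (hFsm.of_le (by exact_mod_cast le_top)) h'f
      (k := 0) (n := N) (le_refl _) (by exact_mod_cast hN) w
    rw [norm_iteratedFDeriv_zero] at h
    refine h.trans ?_
    have hsum : (∑ p ∈ Finset.range (0+1) ×ˢ Finset.range (N+1),
        ∫ v, ‖v‖^p.1 * ‖iteratedFDeriv ℝ p.2 F v‖) ≤ J := by
      rw [Finset.sum_product]
      simp only [zero_add, Finset.sum_range_one, pow_zero, one_mul]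
      refine Finset.sum_le_sum_of_subset_of_nonneg
        (Finset.range_subset_range.2 (by omega)) ?_
      intro m _ _
      exact integral_nonneg fun v => norm_nonneg _
    calc (2*π)^(0:ℕ) * (2*(0:ℕ)+2)^N * (∑ p ∈ Finset.range (0+1) ×ˢ Finset.range (N+1),
          ∫ v, ‖v‖^p.1 * ‖iteratedFDeriv ℝ p.2 F v‖)
        ≤ (2*π)^(0:ℕ) * (2*(0:ℕ)+2)^N * J := by
          refine mul_le_mul_of_nonneg_left hsum (by positivity)
      _ = 2^N * J := by norm_num
  have hgF : ∀ x : EuclideanSpace ℝ (Fin n), g x = 𝓕 F (-(2*π)⁻¹ • x) := by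
    intro x
    rw [hg x, Real.fourier_eq']
    refine integral_congr_ae (Filter.Eventually.of_forall fun v => ?_)
    have harg : -2 * π * ⟪v, -(2*π)⁻¹ • x⟫ = ⟪v, x⟫ := by
      rw [real_inner_smul_right]
      field_simp
    have hcomm : (inner ℝ x v : ℝ) = ⟪v, x⟫ := real_inner_comm _ _
    simp only [harg, smul_eq_mul, hcomm, Complex.exp_add]
    rw [mul_comm Complex.I]
    ring
  have hpoint : ∀ x : EuclideanSpace ℝ (Fin n),
      (1 + ‖x‖)^l * ‖g x‖ ≤ Ctot * M := by
    intro x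
    set w : EuclideanSpace ℝ (Fin n) := -(2*π)⁻¹ • x with hw
    have hgx : ‖g x‖ = ‖𝓕 F w‖ := by rw [hgF x]
    have hxw : (2*π) * ‖w‖ = ‖x‖ := by
      rw [hw, norm_smul, Real.norm_eq_abs, abs_neg, abs_inv, abs_of_pos hπ]
      field_simp
    have h0 : ‖g x‖ ≤ J := by
      rw [hgx]
      simpa using hdecay w 0 (Nat.zero_le _)
    have hl2 : ‖w‖^l * ‖𝓕 F w‖ ≤ 2^l * J := hdecay w l le_rfl
    have hxl : ‖x‖^l * ‖g x‖ ≤ (2*π)^l * (2^l * J) := by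
      rw [hgx, ← hxw, mul_pow, mul_assoc]
      exact mul_le_mul_of_nonneg_left hl2 (by positivity)
    have hpow : (1 + ‖x‖)^l ≤ 2^l * (1 + ‖x‖^l) := by
      have h1 : (1 + ‖x‖) ≤ 2 * max 1 ‖x‖ := by
        rcases le_total ‖x‖ 1 with h | h
        · rw [max_eq_left h]; linarith
        · rw [max_eq_right h]; linarith
      calc (1+‖x‖)^l ≤ (2 * max 1 ‖x‖)^l := by
            refine pow_le_pow_left₀ (by positivity) h1 l
        _ = 2^l * (max 1 ‖x‖)^l := mul_pow _ _ _
        _ ≤ 2^l * (1 + ‖x‖^l) := by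
            refine mul_le_mul_of_nonneg_left ?_ (by positivity)
            rcases le_total ‖x‖ 1 with h | h
            · rw [max_eq_left h, one_pow]
              nlinarith [pow_nonneg (norm_nonneg x) l]
            · rw [max_eq_right h]
              nlinarith [pow_nonneg (norm_nonneg x) l]
    calc (1+‖x‖)^l * ‖g x‖ ≤ (2^l * (1 + ‖x‖^l)) * ‖g x‖ :=
          mul_le_mul_of_nonneg_right hpow (norm_nonneg _)
      _ = 2^l * (‖g x‖ + ‖x‖^l * ‖g x‖) := by ring
      _ ≤ 2^l * (J + (2*π)^l * (2^l * J)) := by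
          refine mul_le_mul_of_nonneg_left (add_le_add h0 hxl) (by positivity)
      _ = C2 * J := by rw [hC2]; ring
      _ ≤ C2 * (((l:ℝ)+1) * (Vol * (CF * M))) := mul_le_mul_of_nonneg_left hJle hC20
      _ = Ctot * M := by rw [hCtot]; ring
  have hsup : (⨆ x : EuclideanSpace ℝ (Fin n), (1+‖x‖)^l * ‖g x‖) ≤ Ctot * M :=
    ciSup_le hpoint
  calc ‖T α g‖ ≤ b * ⨆ x : EuclideanSpace ℝ (Fin n), (1+‖x‖)^l * ‖g x‖ := hT α g
    _ ≤ b * (Ctot * M) := mul_le_mul_of_nonneg_left hsup hb.le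
    _ = (b * Ctot) * M := by ring
    _ ≤ (b * Ctot + 1) * M := by nlinarith [hM0]
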